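/- Under the assumptions 2n_j < N_j, Ψ > 0 on the grid, and c_k the moments of a positive Φ_o, the functional J₁(Q) = (1/|N|) Σ_{ℓ∈Z²_N} Ψ(ζ_ℓ) log(Ψ(ζ_ℓ)/Q(ζ_ℓ)) + Σ_{k∈Λ} q_k c_k is strictly convex on B₊(N) and attains a unique minimizer there; moreover Φ(ζ_ℓ) = Ψ(ζ_ℓ)/Q̂(ζ_ℓ), with Q̂ the minimizer, satisfies Φ(ζ_ℓ) > 0 for all ℓ. -/

import Mathlib

/-
By the moment identity `∑ₖ qₖ cₖ = |N|⁻¹ ∑_ℓ Φₒ(ζ_ℓ) Q(ζ_ℓ)`, the functional `J₁(Q)`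
is a sum over the grid of the one-variable functions `x ↦ (Ψ/|N|) log (Ψ/x) + (Φₒ/|N|) x`
evaluated at `x = Q(ζ_ℓ)`. Each of them is strictly convex on `(0, ∞)`, bounded below, and tends
to `+∞` at both ends. Because `2nⱼ < Nⱼ`, discrete Fourier inversion recovers every coefficient
`q_k` from the grid values `Q(ζ_ℓ)`, with `|q_k| ≤ max_ℓ |Q(ζ_ℓ)|`. Injectivity of `q ↦ (Q(ζ_ℓ))_ℓ`
turns the convexity of the summands into strict convexity of `J₁`. The bound, together with the
blow-up of the summands at `0` and `∞`, confines the sublevel set `{J₁ ≤ J₁(1)}` to a compact set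
on which every `Q(ζ_ℓ)` stays in some `[δ, R] ⊂ (0, ∞)`; there `J₁` attains its minimum, and strict
convexity makes the minimizer unique.
-/

open Finset Filter Topology

noncomputable section

theorem strictConvexOn_sum_comp_linearMap {E ι : Type*} [AddCommGroup E] [Module ℝ E]
    (V : Submodule ℝ E) (G : Finset ι) (L : E →ₗ[ℝ] ι → ℝ)
    (hL : ∀ x ∈ V, (∀ i ∈ G, L x i = 0) → x = 0) {f : ι → ℝ → ℝ}
    (hf : ∀ i ∈ G, StrictConvexOn ℝ (Set.Ioi 0) (f i)) :
    StrictConvexOn ℝ {x | x ∈ V ∧ ∀ i ∈ G, 0 < L x i} fun x => ∑ i ∈ G, f i (L x i) := by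
  have hLcomb : ∀ x y (s t : ℝ) i, L (s • x + t • y) i = s • L x i + t • L y i := by
    simp
  refine ⟨fun x hx y hy s t hs ht hst => ⟨V.add_mem (V.smul_mem s hx.1) (V.smul_mem t hy.1),
    fun i hi => ?_⟩, fun x hx y hy hxy s t hs ht hst => ?_⟩
  · rw [hLcomb]
    exact convex_Ioi (0 : ℝ) (hx.2 i hi) (hy.2 i hi) hs ht hst
  obtain ⟨i₀, hi₀, hne⟩ : ∃ i ∈ G, L x i ≠ L y i := by
    by_contra! h
    exact hxy (sub_eq_zero.mp (hL _ (V.sub_mem hx.1 hy.1) fun i hi => by simp [h i hi]))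
  simp only [hLcomb, smul_eq_mul, mul_sum, ← sum_add_distrib]
  refine sum_lt_sum (fun i hi => ?_) ⟨i₀, hi₀, ?_⟩
  · exact (hf i hi).convexOn.2 (hx.2 i hi) (hy.2 i hi) hs.le ht.le hst
  · exact (hf i₀ hi₀).2 (hx.2 i₀ hi₀) (hy.2 i₀ hi₀) hne hs ht hst

lemma exists_forall_lt_of_notMem_Icc {ι : Type*} {G : Finset ι} {f : ι → ℝ → ℝ}
    (hf₀ : ∀ i ∈ G, Tendsto (f i) (𝓝[>] 0) atTop) (hf : ∀ i ∈ G, Tendsto (f i) atTop atTop)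
    (T : ι → ℝ) :
    ∃ δ > 0, ∃ R, ∀ y > 0, y ∉ Set.Icc δ R → ∀ i ∈ G, T i < f i y := by
  obtain ⟨δ, hδ, hδT⟩ := mem_nhdsGT_iff_exists_Ioo_subset.1
    ((eventually_all_finset G).2 fun i hi => (hf₀ i hi).eventually_gt_atTop (T i))
  obtain ⟨R, hR⟩ := eventually_atTop.1
    ((eventually_all_finset G).2 fun i hi => (hf i hi).eventually_gt_atTop (T i))
  refine ⟨δ, hδ, R, fun y hy hout => ?_⟩
  rcases not_and_or.1 hout with h | h
  · exact hδT ⟨hy, not_le.1 h⟩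
  · exact hR y (not_le.1 h).le

theorem exists_isMinOn_sum_comp_of_tendsto_atTop {X ι : Type*} [TopologicalSpace X] {C : Set X}
    {G : Finset ι} {v : X → ι → ℝ} (hv : ∀ i ∈ G, Continuous fun x => v x i)
    (hC : ∀ R, IsCompact {x | x ∈ C ∧ ∀ i ∈ G, |v x i| ≤ R})
    {f : ι → ℝ → ℝ} (hfc : ∀ i ∈ G, ContinuousOn (f i) (Set.Ioi 0))
    (hf₀ : ∀ i ∈ G, Tendsto (f i) (𝓝[>] 0) atTop) (hf : ∀ i ∈ G, Tendsto (f i) atTop atTop)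
    (hfb : ∀ i ∈ G, BddBelow (f i '' Set.Ioi 0))
    (hne : {x | x ∈ C ∧ ∀ i ∈ G, 0 < v x i}.Nonempty) :
    ∃ x ∈ {x | x ∈ C ∧ ∀ i ∈ G, 0 < v x i},
      IsMinOn (fun x => ∑ i ∈ G, f i (v x i)) {x | x ∈ C ∧ ∀ i ∈ G, 0 < v x i} x := by
  classical
  set S := {x | x ∈ C ∧ ∀ i ∈ G, 0 < v x i}
  set F := fun x => ∑ i ∈ G, f i (v x i)
  obtain ⟨x₀, hx₀⟩ := hne
  choose! m hm using hfb
  -- a single coordinate above `T i` already pushes `F` above `F x₀`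
  obtain ⟨δ, hδ, R, hT⟩ := exists_forall_lt_of_notMem_Icc hf₀ hf fun i => F x₀ - ∑ j ∈ G, m j + m i
  have hbounds : ∀ x ∈ S, F x ≤ F x₀ → ∀ i ∈ G, v x i ∈ Set.Icc δ R := by
    intro x hx hFx i hi
    by_contra hout
    have hTi := hT _ (hx.2 i hi) hout i hi
    have hrest : ∑ j ∈ G.erase i, m j ≤ ∑ j ∈ G.erase i, f j (v x j) :=
      sum_le_sum fun j hj => hm j (mem_of_mem_erase hj) ⟨_, hx.2 j (mem_of_mem_erase hj), rfl⟩
    have hF := add_sum_erase G (fun j => f j (v x j)) hi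
    have hm' := add_sum_erase G m hi
    simp only [F] at hFx hF hTi
    linarith
  set K := {x | x ∈ C ∧ ∀ i ∈ G, |v x i| ≤ R} ∩ {x | ∀ i ∈ G, v x i ∈ Set.Icc δ R}
  have hKS : K ⊆ S := fun x hx => ⟨hx.1.1, fun i hi => hδ.trans_le (hx.2 i hi).1⟩
  have hSK : ∀ x ∈ S, F x ≤ F x₀ → x ∈ K := fun x hx hFx =>
    ⟨⟨hx.1, fun i hi => (abs_of_pos (hx.2 i hi)).trans_le (hbounds x hx hFx i hi).2⟩,
      hbounds x hx hFx⟩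
  have hK : IsCompact K := by
    refine (hC R).inter_right ?_
    simp only [Set.ofPred_forall]
    exact isClosed_iInter fun i => isClosed_iInter fun hi => isClosed_Icc.preimage (hv i hi)
  have hFK : ContinuousOn F K := continuousOn_finsetSum _ fun i hi =>
    (hfc i hi).comp (hv i hi).continuousOn fun x hx => (hKS hx).2 i hi
  obtain ⟨y, hyK, hymin⟩ := hK.exists_isMinOn ⟨x₀, hSK x₀ hx₀ le_rfl⟩ hFK
  refine ⟨y, hKS hyK, fun x hx => ?_⟩
  by_cases hFx : F x ≤ F x₀
  · exact hymin (hSK x hx hFx)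
  · exact (hymin (hSK x₀ hx₀ le_rfl)).trans (not_le.1 hFx).le

def logBarrier (a c b x : ℝ) : ℝ := a * Real.log (c / x) + b * x

section LogBarrier

variable {a c b : ℝ}

lemma strictConvexOn_logBarrier (ha : 0 < a) (hc : c ≠ 0) :
    StrictConvexOn ℝ (Set.Ioi 0) (logBarrier a c b) := by
  refine ⟨convex_Ioi 0, fun x hx y hy hxy s t hs ht hst => ?_⟩
  have hlog := strictConcaveOn_log_Ioi.2 hx hy hxy hs ht hst
  have hsum : 0 < s * x + t * y := by
    simpa using (convex_Ioi (0 : ℝ)) hx hy hs.le ht.le hst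
  simp only [smul_eq_mul] at hlog ⊢
  simp only [logBarrier, Real.log_div hc hsum.ne', Real.log_div hc (ne_of_gt hx),
    Real.log_div hc (ne_of_gt hy)]
  have hc' : a * Real.log c * (s + t) = a * Real.log c := by rw [hst, mul_one]
  linarith [mul_lt_mul_of_pos_left hlog ha]

lemma continuousOn_logBarrier (hc : c ≠ 0) : ContinuousOn (logBarrier a c b) (Set.Ioi 0) := by
  refine ContinuousOn.add (continuousOn_const.mul ?_) (continuousOn_const.mul continuousOn_id)
  exact (continuousOn_const.div continuousOn_id fun x hx => ne_of_gt hx).log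
    fun x hx => div_ne_zero hc (ne_of_gt hx)

lemma tendsto_logBarrier_nhdsGT_zero (ha : 0 < a) (hc : 0 < c) :
    Tendsto (logBarrier a c b) (𝓝[>] 0) atTop := by
  have hlog : Tendsto (fun x => Real.log (c / x)) (𝓝[>] 0) atTop := by
    simp only [div_eq_mul_inv]
    exact Real.tendsto_log_atTop.comp (tendsto_inv_nhdsGT_zero.const_mul_atTop hc)
  have hlin : Tendsto (fun x => b * x) (𝓝[>] 0) (𝓝 0) := by
    simpa using ((continuous_const_mul b).tendsto 0).mono_left nhdsWithin_le_nhds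
  exact (hlog.const_mul_atTop ha).atTop_add hlin

lemma le_logBarrier (ha : 0 < a) (hc : c ≠ 0) (hb : 0 < b) {x : ℝ} (hx : 0 < x) :
    a * Real.log (c * b / a) + a ≤ logBarrier a c b x := by
  have hlog := Real.log_le_sub_one_of_pos (show 0 < b * x / a by positivity)
  rw [Real.log_div (by positivity) ha.ne', Real.log_mul hb.ne' hx.ne'] at hlog
  rw [logBarrier, Real.log_div (by positivity) ha.ne', Real.log_mul hc hb.ne',
    Real.log_div hc hx.ne']
  have h := mul_le_mul_of_nonneg_left hlog ha.le
  have hcancel : a * (b * x / a - 1) = b * x - a := by field_simp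
  linarith

lemma bddBelow_logBarrier (ha : 0 < a) (hc : c ≠ 0) (hb : 0 < b) :
    BddBelow (logBarrier a c b '' Set.Ioi 0) :=
  ⟨_, Set.forall_mem_image.2 fun _ hx => le_logBarrier ha hc hb hx⟩

lemma tendsto_logBarrier_atTop (ha : 0 < a) (hc : c ≠ 0) (hb : 0 < b) :
    Tendsto (logBarrier a c b) atTop atTop := by
  have hlin : Tendsto (fun x => a * Real.log (c * (b / 2) / a) + a + b / 2 * x) atTop atTop :=
    tendsto_atTop_add_const_left _ _ (tendsto_id.const_mul_atTop (by positivity))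
  refine tendsto_atTop_mono' _ ?_ hlin
  filter_upwards [eventually_gt_atTop 0] with x hx
  have h := le_logBarrier ha hc (half_pos hb) hx
  simp only [logBarrier] at h ⊢
  linarith

end LogBarrier

section Characters

variable {N N₁ N₂ : ℕ}

def cyclicExp (N : ℕ) (j : ℤ) (l : ℕ) : ℂ :=
  Complex.exp (Complex.I * (j : ℂ) * (l : ℂ) * (2 * Real.pi / N))

def gridChar (N₁ N₂ : ℕ) (k : ℤ × ℤ) (ℓ : ℕ × ℕ) : ℂ :=
  cyclicExp N₁ k.1 ℓ.1 * cyclicExp N₂ k.2 ℓ.2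

lemma cyclicExp_eq_pow (j : ℤ) (l : ℕ) :
    cyclicExp N j l = (Complex.exp (2 * Real.pi * Complex.I / N) ^ j) ^ l := by
  rw [← Complex.exp_int_mul, ← Complex.exp_nat_mul, cyclicExp]
  ring_nf

lemma sum_cyclicExp {j : ℤ} (hj : j.natAbs < N) :
    ∑ l ∈ range N, cyclicExp N j l = if j = 0 then (N : ℂ) else 0 := by
  split_ifs with h
  · simp [cyclicExp, h]
  have hprim := Complex.isPrimitiveRoot_exp N (by omega)
  have hne : Complex.exp (2 * Real.pi * Complex.I / N) ^ j ≠ 1 := fun h1 =>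
    h (Int.eq_zero_of_dvd_of_natAbs_lt_natAbs ((hprim.zpow_eq_one_iff_dvd j).1 h1) (by simpa))
  have hN : (Complex.exp (2 * Real.pi * Complex.I / N) ^ j) ^ N = 1 := by
    rw [← zpow_natCast, ← zpow_mul, mul_comm j, zpow_mul, zpow_natCast, hprim.pow_eq_one, one_zpow]
  simp only [cyclicExp_eq_pow, geom_sum_eq hne, hN, sub_self, zero_div]

lemma gridChar_mul (k m : ℤ × ℤ) (ℓ : ℕ × ℕ) :
    gridChar N₁ N₂ k ℓ * gridChar N₁ N₂ m ℓ = gridChar N₁ N₂ (k + m) ℓ := by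
  simp only [gridChar, cyclicExp, ← Complex.exp_add, Prod.fst_add, Prod.snd_add]
  congr 1
  push_cast
  ring

lemma conj_gridChar (k : ℤ × ℤ) (ℓ : ℕ × ℕ) :
    starRingEnd ℂ (gridChar N₁ N₂ k ℓ) = gridChar N₁ N₂ (-k) ℓ := by
  simp only [gridChar, cyclicExp, map_mul, ← Complex.exp_conj, map_div₀, Complex.conj_I,
    Complex.conj_ofReal, map_ofNat, map_natCast, map_intCast, Prod.fst_neg, Prod.snd_neg]
  push_cast
  ring_nf

lemma norm_gridChar (k : ℤ × ℤ) (ℓ : ℕ × ℕ) : ‖gridChar N₁ N₂ k ℓ‖ = 1 := by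
  simp [gridChar, cyclicExp, Complex.norm_exp]

lemma gridChar_zero (ℓ : ℕ × ℕ) : gridChar N₁ N₂ 0 ℓ = 1 := by
  simp [gridChar, cyclicExp]

lemma sum_gridChar {d : ℤ × ℤ} (hd₁ : d.1.natAbs < N₁) (hd₂ : d.2.natAbs < N₂) :
    ∑ ℓ ∈ range N₁ ×ˢ range N₂, gridChar N₁ N₂ d ℓ
      = if d = 0 then (N₁ * N₂ : ℂ) else 0 := by
  simp only [sum_product, gridChar]
  rw [← sum_mul_sum, sum_cyclicExp hd₁, sum_cyclicExp hd₂]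
  split_ifs <;> simp_all [Prod.ext_iff]

end Characters

abbrev freqBox (n₁ n₂ : ℕ) : Finset (ℤ × ℤ) := Icc (-(n₁ : ℤ)) n₁ ×ˢ Icc (-(n₂ : ℤ)) n₂

lemma mem_freqBox {n₁ n₂ : ℕ} {k : ℤ × ℤ} :
    k ∈ freqBox n₁ n₂ ↔ -(n₁ : ℤ) ≤ k.1 ∧ k.1 ≤ n₁ ∧ -(n₂ : ℤ) ≤ k.2 ∧ k.2 ≤ n₂ := by
  simp [freqBox, and_assoc]

def trigPolyRe (N₁ N₂ n₁ n₂ : ℕ) : (ℤ × ℤ → ℝ) →ₗ[ℝ] ℕ × ℕ → ℝ where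
  toFun q ℓ := (∑ k ∈ freqBox n₁ n₂, (q k : ℂ) * gridChar N₁ N₂ k ℓ).re
  map_add' q q' := by ext ℓ; simp [add_mul, sum_add_distrib]
  map_smul' a q := by ext ℓ; simp [mul_assoc, ← mul_sum]

def symmetricCoeffs (n₁ n₂ : ℕ) : Submodule ℝ (ℤ × ℤ → ℝ) where
  carrier := {q | (∀ k, q k = q (-k)) ∧ ∀ k ∉ freqBox n₁ n₂, q k = 0}
  add_mem' hq hq' := ⟨fun k => by simp [hq.1 k, hq'.1 k],
    fun k hk => by simp [hq.2 k hk, hq'.2 k hk]⟩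
  zero_mem' := by simp
  smul_mem' a q hq := ⟨fun k => by simp [hq.1 k], fun k hk => by simp [hq.2 k hk]⟩

section TrigPoly

variable {N₁ N₂ n₁ n₂ : ℕ}

lemma trigPolyRe_apply (q : ℤ × ℤ → ℝ) (ℓ : ℕ × ℕ) :
    trigPolyRe N₁ N₂ n₁ n₂ q ℓ = (∑ k ∈ freqBox n₁ n₂, (q k : ℂ) * gridChar N₁ N₂ k ℓ).re :=
  rfl

lemma ofReal_trigPolyRe {q : ℤ × ℤ → ℝ} (hq : ∀ k, q k = q (-k)) (ℓ : ℕ × ℕ) :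
    (trigPolyRe N₁ N₂ n₁ n₂ q ℓ : ℂ) = ∑ k ∈ freqBox n₁ n₂, (q k : ℂ) * gridChar N₁ N₂ k ℓ := by
  refine Complex.conj_eq_iff_re.mp ?_
  rw [map_sum]
  have hneg : ∀ k ∈ freqBox n₁ n₂, -k ∈ freqBox n₁ n₂ := fun k hk => by
    simp only [mem_freqBox, Prod.fst_neg, Prod.snd_neg] at hk ⊢
    omega
  refine sum_nbij' (fun k => -k) (fun k => -k) hneg hneg (fun k _ => neg_neg k)
    (fun k _ => neg_neg k) fun k _ => ?_
  simp [conj_gridChar, hq (-k)]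

lemma sum_trigPolyRe_mul_gridChar (h₁ : 2 * n₁ < N₁) (h₂ : 2 * n₂ < N₂) {q : ℤ × ℤ → ℝ}
    (hq : ∀ k, q k = q (-k)) {m : ℤ × ℤ} (hm : m ∈ freqBox n₁ n₂) :
    ∑ ℓ ∈ range N₁ ×ˢ range N₂, (trigPolyRe N₁ N₂ n₁ n₂ q ℓ : ℂ) * gridChar N₁ N₂ (-m) ℓ
      = q m * (N₁ * N₂ : ℂ) := by
  have horth : ∀ k ∈ freqBox n₁ n₂, ∑ ℓ ∈ range N₁ ×ˢ range N₂, gridChar N₁ N₂ (k + -m) ℓ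
      = if k = m then (N₁ * N₂ : ℂ) else 0 := by
    intro k hk
    rw [mem_freqBox] at hk hm
    rw [sum_gridChar (by simp only [Prod.fst_add, Prod.fst_neg]; omega)
      (by simp only [Prod.snd_add, Prod.snd_neg]; omega)]
    simp only [add_neg_eq_zero]
  simp_rw [ofReal_trigPolyRe hq, sum_mul, mul_assoc, gridChar_mul]
  rw [sum_comm, sum_congr rfl fun k hk => by rw [← mul_sum, horth k hk]]
  simp [hm]

lemma abs_le_of_abs_trigPolyRe_le (h₁ : 2 * n₁ < N₁) (h₂ : 2 * n₂ < N₂) {q : ℤ × ℤ → ℝ}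
    (hq : q ∈ symmetricCoeffs n₁ n₂) {R : ℝ}
    (hR : ∀ ℓ ∈ range N₁ ×ˢ range N₂, |trigPolyRe N₁ N₂ n₁ n₂ q ℓ| ≤ R) (k : ℤ × ℤ) :
    |q k| ≤ R := by
  have hR0 : 0 ≤ R := (abs_nonneg _).trans (hR (0, 0) (by simp; omega))
  by_cases hk : k ∈ freqBox n₁ n₂
  swap
  · simpa [hq.2 k hk] using hR0
  have hN : (0 : ℝ) < N₁ * N₂ := mul_pos (Nat.cast_pos.2 (by omega)) (Nat.cast_pos.2 (by omega))
  refine le_of_mul_le_mul_right ?_ hN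
  calc |q k| * (N₁ * N₂) = ‖∑ ℓ ∈ range N₁ ×ˢ range N₂,
        (trigPolyRe N₁ N₂ n₁ n₂ q ℓ : ℂ) * gridChar N₁ N₂ (-k) ℓ‖ := by
        rw [sum_trigPolyRe_mul_gridChar h₁ h₂ hq.1 hk]
        norm_cast
        simp
    _ ≤ ∑ ℓ ∈ range N₁ ×ˢ range N₂, |trigPolyRe N₁ N₂ n₁ n₂ q ℓ| := by
        refine (norm_sum_le _ _).trans_eq (sum_congr rfl fun ℓ _ => ?_)
        simp [norm_gridChar]
    _ ≤ R * (N₁ * N₂) := by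
        refine (sum_le_sum hR).trans_eq ?_
        simp [mul_comm]

lemma continuous_trigPolyRe_apply (ℓ : ℕ × ℕ) :
    Continuous fun q => trigPolyRe N₁ N₂ n₁ n₂ q ℓ := by
  simp only [trigPolyRe_apply]
  fun_prop

lemma isCompact_setOf_abs_trigPolyRe_le (h₁ : 2 * n₁ < N₁) (h₂ : 2 * n₂ < N₂) (R : ℝ) :
    IsCompact {q | q ∈ symmetricCoeffs n₁ n₂ ∧
      ∀ ℓ ∈ range N₁ ×ˢ range N₂, |trigPolyRe N₁ N₂ n₁ n₂ q ℓ| ≤ R} := by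
  refine (isCompact_univ_pi fun _ => isCompact_Icc (a := -R) (b := R)).of_isClosed_subset ?_
    fun q hq k _ => abs_le.mp (abs_le_of_abs_trigPolyRe_le h₁ h₂ hq.1 hq.2 k)
  simp only [symmetricCoeffs, Submodule.mem_mk, AddSubmonoid.mem_mk, AddSubsemigroup.mem_mk,
    Set.ofPred_and, Set.ofPred_forall]
  refine ((isClosed_iInter fun k => isClosed_eq (continuous_apply k) (continuous_apply (-k))).inter
    (isClosed_iInter fun k => isClosed_iInter fun _ => isClosed_eq (continuous_apply k)
      continuous_const)).inter
    (isClosed_iInter fun ℓ => isClosed_iInter fun _ =>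
      isClosed_le (continuous_trigPolyRe_apply ℓ).abs continuous_const)

lemma sum_mul_moment {Φ : ℕ × ℕ → ℝ} {c : ℤ × ℤ → ℝ}
    (hc : ∀ k, (c k : ℂ) = (1 / ((N₁ : ℂ) * (N₂ : ℂ))) *
      ∑ ℓ ∈ range N₁ ×ˢ range N₂, gridChar N₁ N₂ k ℓ * (Φ ℓ : ℂ)) (q : ℤ × ℤ → ℝ) :
    ∑ k ∈ freqBox n₁ n₂, q k * c k
      = ∑ ℓ ∈ range N₁ ×ˢ range N₂, Φ ℓ / (N₁ * N₂) * trigPolyRe N₁ N₂ n₁ n₂ q ℓ := by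
  have h : ((∑ k ∈ freqBox n₁ n₂, q k * c k : ℝ) : ℂ) = ∑ ℓ ∈ range N₁ ×ˢ range N₂,
      ((Φ ℓ / (N₁ * N₂) : ℝ) : ℂ) * ∑ k ∈ freqBox n₁ n₂, (q k : ℂ) * gridChar N₁ N₂ k ℓ := by
    push_cast
    simp_rw [hc, mul_sum]
    rw [sum_comm]
    refine sum_congr rfl fun ℓ _ => sum_congr rfl fun k _ => by ring
  rw [← Complex.ofReal_re (∑ k ∈ freqBox n₁ n₂, q k * c k), h, Complex.re_sum]
  exact sum_congr rfl fun ℓ _ => Complex.re_ofReal_mul _ _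

lemma sum_log_add_sum_mul_moment {Φ Ψ : ℕ × ℕ → ℝ} {c : ℤ × ℤ → ℝ}
    (hc : ∀ k, (c k : ℂ) = (1 / ((N₁ : ℂ) * (N₂ : ℂ))) *
      ∑ ℓ ∈ range N₁ ×ˢ range N₂, gridChar N₁ N₂ k ℓ * (Φ ℓ : ℂ)) (q : ℤ × ℤ → ℝ) :
    1 / ((N₁ : ℝ) * N₂) * ∑ ℓ ∈ range N₁ ×ˢ range N₂,
        Ψ ℓ * Real.log (Ψ ℓ / trigPolyRe N₁ N₂ n₁ n₂ q ℓ) + ∑ k ∈ freqBox n₁ n₂, q k * c k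
      = ∑ ℓ ∈ range N₁ ×ˢ range N₂,
        logBarrier (Ψ ℓ / (N₁ * N₂)) (Ψ ℓ) (Φ ℓ / (N₁ * N₂)) (trigPolyRe N₁ N₂ n₁ n₂ q ℓ) := by
  rw [sum_mul_moment hc, mul_sum, ← sum_add_distrib]
  refine sum_congr rfl fun ℓ _ => ?_
  rw [logBarrier]
  ring

lemma trigPolyRe_single_zero : trigPolyRe N₁ N₂ n₁ n₂ (Pi.single 0 1) = 1 := by
  ext ℓ
  rw [trigPolyRe_apply, sum_eq_single (0 : ℤ × ℤ)]
  · simp [gridChar_zero]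
  · intro k _ hk
    simp [hk]
  · intro h
    exact absurd (mem_freqBox.2 (by simp)) h

lemma single_zero_mem_symmetricCoeffs : Pi.single 0 1 ∈ symmetricCoeffs n₁ n₂ := by
  refine ⟨fun k => ?_, fun k hk => ?_⟩
  · by_cases hk : k = 0 <;> simp [hk]
  · rw [Pi.single_eq_of_ne]
    rintro rfl
    exact hk (mem_freqBox.2 (by simp))

end TrigPoly

end

/-- The dual functional `J₁` is strictly convex on `B₊(N)` and attains a unique
minimizer `Q̂` there; moreover `Φ = Ψ/Q̂` is strictly positive on the grid. -/
theorem stmt13 (n₁ n₂ N₁ N₂ : ℕ) (h₁ : 2 * n₁ < N₁) (h₂ : 2 * n₂ < N₂)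
    (ζ : ℤ × ℤ → ℕ × ℕ → ℂ)
    (hζ : ∀ k ℓ, ζ k ℓ =
      Complex.exp (Complex.I * (k.1 : ℂ) * (ℓ.1 : ℂ) * (2 * Real.pi / N₁)) *
      Complex.exp (Complex.I * (k.2 : ℂ) * (ℓ.2 : ℂ) * (2 * Real.pi / N₂)))
    (Φo : ℕ × ℕ → ℝ) (hΦo : ∀ ℓ ∈ Finset.range N₁ ×ˢ Finset.range N₂, 0 < Φo ℓ)
    (Ψ : ℕ × ℕ → ℝ) (hΨ : ∀ ℓ ∈ Finset.range N₁ ×ˢ Finset.range N₂, 0 < Ψ ℓ)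
    (c : ℤ × ℤ → ℝ)
    (hc : ∀ k, (c k : ℂ) = (1 / ((N₁ : ℂ) * (N₂ : ℂ))) *
      ∑ ℓ ∈ Finset.range N₁ ×ˢ Finset.range N₂, ζ k ℓ * (Φo ℓ : ℂ))
    (Qv : (ℤ × ℤ → ℝ) → ℕ × ℕ → ℝ)
    (hQv : ∀ q ℓ, Qv q ℓ =
      (∑ k ∈ Finset.Icc (-(n₁ : ℤ)) (n₁ : ℤ) ×ˢ Finset.Icc (-(n₂ : ℤ)) (n₂ : ℤ),
        (q k : ℂ) * ζ k ℓ).re)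
    (B : Set (ℤ × ℤ → ℝ))
    (hB : B = {q | (∀ k, q k = q (-k)) ∧
      (∀ k ∉ Finset.Icc (-(n₁ : ℤ)) (n₁ : ℤ) ×ˢ Finset.Icc (-(n₂ : ℤ)) (n₂ : ℤ), q k = 0) ∧
      ∀ ℓ ∈ Finset.range N₁ ×ˢ Finset.range N₂, 0 < Qv q ℓ})
    (J : (ℤ × ℤ → ℝ) → ℝ)
    (hJ : ∀ q, J q = (1 / ((N₁ : ℝ) * (N₂ : ℝ))) *
        ∑ ℓ ∈ Finset.range N₁ ×ˢ Finset.range N₂,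
          Ψ ℓ * Real.log (Ψ ℓ / Qv q ℓ)
      + ∑ k ∈ Finset.Icc (-(n₁ : ℤ)) (n₁ : ℤ) ×ˢ Finset.Icc (-(n₂ : ℤ)) (n₂ : ℤ),
          q k * c k) :
    StrictConvexOn ℝ B J ∧
    ∃! q : ℤ × ℤ → ℝ, q ∈ B ∧ (∀ q' ∈ B, J q ≤ J q') ∧
      ∀ ℓ ∈ Finset.range N₁ ×ˢ Finset.range N₂, 0 < Ψ ℓ / Qv q ℓ := by
  have hN : 0 < (N₁ : ℝ) * N₂ := mul_pos (Nat.cast_pos.2 (by omega)) (Nat.cast_pos.2 (by omega))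
  obtain rfl : ζ = gridChar N₁ N₂ := funext₂ hζ
  obtain rfl : Qv = trigPolyRe N₁ N₂ n₁ n₂ := funext₂ hQv
  obtain rfl : B = {q | q ∈ symmetricCoeffs n₁ n₂ ∧
      ∀ ℓ ∈ range N₁ ×ˢ range N₂, 0 < trigPolyRe N₁ N₂ n₁ n₂ q ℓ} :=
    hB.trans (Set.ext fun _ => and_assoc.symm)
  set f : ℕ × ℕ → ℝ → ℝ := fun ℓ => logBarrier (Ψ ℓ / (N₁ * N₂)) (Ψ ℓ) (Φo ℓ / (N₁ * N₂))
  obtain rfl : J = fun q => ∑ ℓ ∈ range N₁ ×ˢ range N₂, f ℓ (trigPolyRe N₁ N₂ n₁ n₂ q ℓ) :=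
    funext fun q => (hJ q).trans (sum_log_add_sum_mul_moment hc q)
  have hconv := strictConvexOn_sum_comp_linearMap (f := f) (symmetricCoeffs n₁ n₂) _
    (trigPolyRe N₁ N₂ n₁ n₂) (fun q hq h0 => funext fun k => abs_nonpos_iff.1
      (abs_le_of_abs_trigPolyRe_le h₁ h₂ hq (fun ℓ hℓ => by simp [h0 ℓ hℓ]) k))
    fun ℓ hℓ => strictConvexOn_logBarrier (div_pos (hΨ ℓ hℓ) hN) (hΨ ℓ hℓ).ne'
  obtain ⟨q, hq, hmin⟩ := exists_isMinOn_sum_comp_of_tendsto_atTop (f := f)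
    (fun ℓ _ => continuous_trigPolyRe_apply ℓ) (isCompact_setOf_abs_trigPolyRe_le h₁ h₂)
    (fun ℓ hℓ => continuousOn_logBarrier (hΨ ℓ hℓ).ne')
    (fun ℓ hℓ => tendsto_logBarrier_nhdsGT_zero (div_pos (hΨ ℓ hℓ) hN) (hΨ ℓ hℓ))
    (fun ℓ hℓ => tendsto_logBarrier_atTop (div_pos (hΨ ℓ hℓ) hN) (hΨ ℓ hℓ).ne'
      (div_pos (hΦo ℓ hℓ) hN))
    (fun ℓ hℓ => bddBelow_logBarrier (div_pos (hΨ ℓ hℓ) hN) (hΨ ℓ hℓ).ne'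
      (div_pos (hΦo ℓ hℓ) hN))
    ⟨_, single_zero_mem_symmetricCoeffs, fun ℓ _ => by simp [trigPolyRe_single_zero]⟩
  refine ⟨hconv, q, ⟨hq, isMinOn_iff.1 hmin, fun ℓ hℓ => div_pos (hΨ ℓ hℓ) (hq.2 ℓ hℓ)⟩,
    fun q' hq' => hconv.eq_of_isMinOn (isMinOn_iff.2 hq'.2.1) hmin hq'.1 hq⟩
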